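/- Let (M, d, μ) be a metric measure space with V(x,r) = μ(B(x,r)) satisfying V(x, λr)/V(x, r) ≤ C_1·λ^γ for all x ∈ M, λ > 1 and r > 0, for some C_1 ≥ 1 and γ > 0. Let f: (0,∞) → (0,∞) be increasing with f(0+) = 0 and f(R)/f(r) ≥ c_3·(R/r)^δ for all R ≥ r > 0, for some c_3 ∈ (0,1] and δ > 0. Let φ be a Bernstein function with φ(0) = 0 such that φ(λθ) ≤ C_4·λ^β·φ(θ) for all λ ∈ (0,1] and θ > 0, for some β > 0 and C_4 ≥ 1, with subordinator laws μ_t and potential measure U(A) = ∫_0^∞ μ_t(A) dt. Let p: (0,∞) × M × M → [0,∞) be measurable with p(t; x, y) ≥ c_2·(1/V(x, f^{−1}(t)))·1_{{f(d(x,y)) ≤ t}} for all t > 0 and x, y ∈ M, for some c_2 > 0, where f^{−1}(u) = inf{r > 0 : f(r) ≥ u}. Then there is a constant c > 0 such that the subordinated Green function G_φ(x,y) = ∫_{(0,∞)} p(s; x, y) U(ds) satisfies G_φ(x, y) ≥ c / (V(x, d(x,y))·φ(1/f(d(x,y)))) for all x, y ∈ M with x ≠ y. -/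

import Mathlib

open MeasureTheory Real Set

noncomputable section

/-- A Bernstein function: continuous on `[0,∞)`, smooth on `(0,∞)`, nonnegative, and
`(-1)^(n-1) φ^(n)(u) ≥ 0` for all `u > 0` and `n ≥ 1`. -/
def IsBernstein (φ : ℝ → ℝ) : Prop :=
  ContinuousOn φ (Set.Ici 0) ∧ ContDiffOn ℝ (⊤ : ℕ∞) φ (Set.Ioi 0) ∧
  (∀ x ∈ Set.Ici (0 : ℝ), 0 ≤ φ x) ∧
  ∀ n : ℕ, 1 ≤ n → ∀ u : ℝ, 0 < u → 0 ≤ (-1 : ℝ) ^ (n - 1) * iteratedDeriv n φ u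

/-- `μ t` is the law of the subordinator with Laplace exponent `φ` at time `t > 0`. -/
def IsSubordinatorLaw (φ : ℝ → ℝ) (μ : ℝ → Measure ℝ) : Prop :=
  ∀ t : ℝ, 0 < t →
    IsProbabilityMeasure (μ t) ∧ μ t (Set.Iio 0) = 0 ∧
    ∀ l : ℝ, 0 ≤ l → (∫ s, Real.exp (-l * s) ∂μ t) = Real.exp (-t * φ l)

/-- Generalized inverse of an increasing function: `f⁻¹(u) = inf {r > 0 : f(r) ≥ u}`. -/
def genInv (f : ℝ → ℝ) (u : ℝ) : ℝ := sInf {r : ℝ | 0 < r ∧ u ≤ f r}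

set_option maxHeartbeats 2000000 in
theorem subordinated_green_function_lower_bound
    {M : Type*} [MetricSpace M] [MeasurableSpace M] [BorelSpace M]
    (μM : Measure M)
    (hVfin : ∀ (x : M) (r : ℝ), μM (Metric.closedBall x r) ≠ ⊤)
    (hVpos : ∀ (x : M) (r : ℝ), 0 < r → 0 < (μM (Metric.closedBall x r)).toReal)
    (C₁ γ : ℝ) (hC₁ : 1 ≤ C₁) (hγ : 0 < γ)
    (hVdoub : ∀ (x : M) (l r : ℝ), 1 < l → 0 < r →
      (μM (Metric.closedBall x (l * r))).toReal ≤
        C₁ * l ^ γ * (μM (Metric.closedBall x r)).toReal)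
    (f : ℝ → ℝ) (hfpos : ∀ r : ℝ, 0 < r → 0 < f r)
    (hfmono : StrictMonoOn f (Set.Ioi 0))
    (hflim : Filter.Tendsto f (nhdsWithin 0 (Set.Ioi 0)) (nhds 0))
    (c₃ δ : ℝ) (hc₃0 : 0 < c₃) (hc₃1 : c₃ ≤ 1) (hδ : 0 < δ)
    (hfscal : ∀ r R : ℝ, 0 < r → r ≤ R → c₃ * (R / r) ^ δ ≤ f R / f r)
    (φ : ℝ → ℝ) (hφ : IsBernstein φ) (hφ0 : φ 0 = 0)
    (β C₄ : ℝ) (hβ : 0 < β) (hC₄ : 1 ≤ C₄)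
    (hφlo : ∀ l : ℝ, 0 < l → l ≤ 1 → ∀ θ : ℝ, 0 < θ → φ (l * θ) ≤ C₄ * l ^ β * φ θ)
    (μ : ℝ → Measure ℝ) (hμ : IsSubordinatorLaw φ μ)
    (U : Measure ℝ)
    (hU : ∀ s : Set ℝ, MeasurableSet s → U s = ∫⁻ t in Set.Ioi (0 : ℝ), μ t s)
    (p : ℝ → M → M → ℝ)
    (hpmeas : Measurable fun q : ℝ × M × M => p q.1 q.2.1 q.2.2)
    (hp0 : ∀ (t : ℝ), 0 < t → ∀ x y : M, 0 ≤ p t x y)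
    (c₂ : ℝ) (hc₂ : 0 < c₂)
    (hpge : ∀ (t : ℝ), 0 < t → ∀ x y : M,
      c₂ * (if f (dist x y) ≤ t then (1 : ℝ) else 0) /
          (μM (Metric.closedBall x (genInv f t))).toReal ≤ p t x y) :
    ∃ c : ℝ, 0 < c ∧ ∀ x y : M, x ≠ y →
      ENNReal.ofReal (c /
          ((μM (Metric.closedBall x (dist x y))).toReal * φ (1 / f (dist x y)))) ≤
        ∫⁻ s in Set.Ioi (0 : ℝ), ENNReal.ofReal (p s x y) ∂U := by
  obtain ⟨hφcont, hφsmooth, hφnn, hφsign⟩ := hφ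
  have hφdiff : DifferentiableOn ℝ φ (Set.Ioi 0) := hφsmooth.differentiableOn (by simp)
  have hd1 : ∀ u : ℝ, 0 < u → 0 ≤ deriv φ u := by
    intro u hu
    have h := hφsign 1 le_rfl u hu
    simpa [iteratedDeriv_one] using h
  have hφmono : MonotoneOn φ (Set.Ici 0) := by
    refine monotoneOn_of_deriv_nonneg (convex_Ici 0) hφcont ?_ ?_
    · rw [interior_Ici]; exact hφdiff
    · rw [interior_Ici]; exact fun u hu => hd1 u hu
  have hφconc : ConcaveOn ℝ (Set.Ici 0) φ := by
    refine concaveOn_of_deriv2_nonpos (convex_Ici 0) hφcont ?_ ?_ ?_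
    · rw [interior_Ici]; exact hφdiff
    · rw [interior_Ici]
      exact (hφsmooth.deriv_of_isOpen (m := 1) isOpen_Ioi (by exact WithTop.coe_le_coe.mpr le_top)).differentiableOn one_ne_zero
    · rw [interior_Ici]
      intro u hu
      have h := hφsign 2 (by norm_num) u hu
      rw [← iteratedDeriv_eq_iterate]
      simpa using h
  by_cases hzero : ∀ u : ℝ, 0 < u → φ u = 0
  · refine ⟨1, one_pos, fun x y hxy => ?_⟩
    have hρ : 0 < dist x y := dist_pos.mpr hxy
    rw [hzero (1 / f (dist x y)) (by have := hfpos _ hρ; positivity), mul_zero, div_zero,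
      ENNReal.ofReal_zero]
    exact zero_le
  push_neg at hzero
  obtain ⟨u₀, hu₀, hφu₀ne⟩ := hzero
  have hφu₀ : 0 < φ u₀ := (hφnn u₀ hu₀.le).lt_of_ne (Ne.symm hφu₀ne)
  have hφpos : ∀ u : ℝ, 0 < u → 0 < φ u := by
    intro u hu
    rcases le_or_gt u₀ u with h | h
    · exact hφu₀.trans_le (hφmono hu₀.le (hu₀.le.trans h) h)
    · have hb0 : (0:ℝ) ≤ u / u₀ := by positivity
      have ha0 : (0:ℝ) ≤ 1 - u / u₀ := by
        have : u / u₀ ≤ 1 := by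
          rw [div_le_one hu₀]; exact h.le
        linarith
      have hc := hφconc.2 (Set.self_mem_Ici) (Set.mem_Ici.mpr hu₀.le) ha0 hb0
        (by ring)
      simp only [smul_eq_mul, mul_zero, hφ0, zero_add] at hc
      have harg : u / u₀ * u₀ = u := div_mul_cancel₀ u hu₀.ne'
      rw [harg] at hc
      have : 0 < u / u₀ * φ u₀ := by positivity
      linarith
  -- constants
  set K := (100 * C₄) ^ β⁻¹ with hKdef
  have h100 : (1:ℝ) ≤ 100 * C₄ := by nlinarith
  have hK1 : (1:ℝ) ≤ K := by
    calc (1:ℝ) = (100 * C₄) ^ (0:ℝ) := (Real.rpow_zero _).symm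
    _ ≤ K := Real.rpow_le_rpow_of_exponent_le h100 (by positivity)
  have hK0 : (0:ℝ) < K := one_pos.trans_le hK1
  have hKβ : K ^ β = 100 * C₄ := by
    rw [hKdef, ← Real.rpow_mul (by positivity), inv_mul_cancel₀ hβ.ne', Real.rpow_one]
  set L := (K / c₃) ^ δ⁻¹ with hLdef
  have hKc : (1:ℝ) ≤ K / c₃ := by
    rw [le_div_iff₀ hc₃0]; linarith
  have hL1 : (1:ℝ) ≤ L := by
    calc (1:ℝ) = (K / c₃) ^ (0:ℝ) := (Real.rpow_zero _).symm
    _ ≤ L := Real.rpow_le_rpow_of_exponent_le hKc (by positivity)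
  have hL0 : (0:ℝ) < L := one_pos.trans_le hL1
  have hLδ : L ^ δ = K / c₃ := by
    rw [hLdef, ← Real.rpow_mul (by positivity), inv_mul_cancel₀ hδ.ne', Real.rpow_one]
  set D := C₁ * (2 * L) ^ γ with hDdef
  have hD0 : (0:ℝ) < D := by
    have : (0:ℝ) < (2 * L) ^ γ := Real.rpow_pos_of_pos (by linarith) γ
    nlinarith
  refine ⟨3 * c₂ / (2 * D), by positivity, fun x y hxy => ?_⟩
  set ρ := dist x y with hρdef
  have hρ : 0 < ρ := dist_pos.mpr hxy
  set t₀ := f ρ with ht₀def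
  have ht₀ : 0 < t₀ := hfpos ρ hρ
  have hq : 0 < φ (1 / t₀) := hφpos _ (by positivity)
  set t₁ := 3 / φ (1 / t₀) with ht₁def
  have ht₁ : 0 < t₁ := by positivity
  set Vρ := (μM (Metric.closedBall x ρ)).toReal with hVρdef
  have hVρ : 0 < Vρ := hVpos x ρ hρ
  have hKt₀ : 0 < K * t₀ := by positivity
  -- f (L * ρ) ≥ K * t₀
  have hfL : K * t₀ ≤ f (L * ρ) := by
    have h1 := hfscal ρ (L * ρ) hρ (le_mul_of_one_le_left hρ.le hL1)
    rw [mul_div_assoc, div_self hρ.ne', mul_one, hLδ] at h1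
    have h2 : c₃ * (K / c₃) = K := by field_simp
    rw [h2] at h1
    rw [ht₀def]
    exact (le_div_iff₀ (hfpos ρ hρ)).mp h1
  -- volume bound
  have hVbound : (μM (Metric.closedBall x (2 * L * ρ))).toReal ≤ D * Vρ :=
    hVdoub x (2 * L) ρ (by linarith) hρ
  -- pointwise bound on p
  have hpbound : ∀ s ∈ Set.Icc t₀ (K * t₀), c₂ / (D * Vρ) ≤ p s x y := by
    intro s hs
    have hs0 : 0 < s := ht₀.trans_le hs.1
    have hSmem : L * ρ ∈ {r : ℝ | 0 < r ∧ s ≤ f r} :=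
      ⟨by positivity, hs.2.trans hfL⟩
    have hgle : genInv f s ≤ L * ρ := csInf_le ⟨0, fun r hr => hr.1.le⟩ hSmem
    have hgpos : 0 < genInv f s := by
      have hev : ∀ᶠ r in nhdsWithin 0 (Set.Ioi 0), f r < t₀ :=
        hflim.eventually_lt_const ht₀
      rw [eventually_nhdsWithin_iff] at hev
      obtain ⟨ε, hε, hball⟩ := Metric.eventually_nhds_iff.mp hev
      refine lt_of_lt_of_le (half_pos hε) (le_csInf ⟨L * ρ, hSmem⟩ ?_)
      intro r hr
      by_contra hlt
      push_neg at hlt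
      have hrε : dist r 0 < ε := by
        rw [Real.dist_eq, sub_zero, abs_of_pos hr.1]
        linarith
      have hfr : f r < t₀ := hball hrε hr.1
      have : s ≤ f r := hr.2
      linarith [hs.1]
    have hVg : 0 < (μM (Metric.closedBall x (genInv f s))).toReal := hVpos x _ hgpos
    have hVgle : (μM (Metric.closedBall x (genInv f s))).toReal ≤ D * Vρ := by
      refine le_trans (ENNReal.toReal_mono (hVfin x _)
        (measure_mono (Metric.closedBall_subset_closedBall ?_))) hVbound
      nlinarith
    have h1 := hpge s hs0 x y
    rw [← hρdef, ← ht₀def, if_pos hs.1, mul_one] at h1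
    exact le_trans (div_le_div_of_nonneg_left hc₂.le hVg hVgle) h1
  -- measure lower bound for each t in [t₁, 2 t₁]
  have hμbound : ∀ t ∈ Set.Icc t₁ (2 * t₁),
      ENNReal.ofReal (1/2) ≤ μ t (Set.Icc t₀ (K * t₀)) := by
    intro t ht
    have ht0 : 0 < t := ht₁.trans_le ht.1
    obtain ⟨hP, hPneg, hlap⟩ := hμ t ht0
    have hint : ∀ l : ℝ, 0 ≤ l → Integrable (fun s => Real.exp (-l * s)) (μ t) := by
      intro l hl
      by_contra hni
      have h := hlap l hl
      rw [integral_undef hni] at h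
      exact (Real.exp_pos _).ne' h.symm
    have hae : ∀ᵐ s ∂(μ t), 0 ≤ s := by
      rw [ae_iff]
      have hset : {s : ℝ | ¬ 0 ≤ s} = Set.Iio 0 := by ext s; simp [not_le]
      rw [hset]; exact hPneg
    have he2 : (2:ℝ) ≤ Real.exp 1 := by linarith [Real.add_one_le_exp 1]
    -- bound on μ t (Iio t₀)
    have hA : (μ t (Set.Iio t₀)).toReal ≤ Real.exp 1 * Real.exp (-t * φ (1/t₀)) := by
      have hsub : μ t (Set.Iio t₀) ≤ μ t (Set.Ico 0 t₀) := by
        have hss : Set.Iio t₀ ⊆ Set.Iio 0 ∪ Set.Ico 0 t₀ := by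
          intro s hs
          rcases lt_or_ge s 0 with h | h
          · exact Or.inl h
          · exact Or.inr ⟨h, hs⟩
        calc μ t (Set.Iio t₀) ≤ μ t (Set.Iio 0 ∪ Set.Ico 0 t₀) := measure_mono hss
        _ ≤ μ t (Set.Iio 0) + μ t (Set.Ico 0 t₀) := measure_union_le _ _
        _ = μ t (Set.Ico 0 t₀) := by rw [hPneg, zero_add]
      have h1 : (μ t (Set.Iio t₀)).toReal ≤ (μ t (Set.Ico 0 t₀)).toReal :=
        ENNReal.toReal_mono (measure_ne_top _ _) hsub
      have h2 : (μ t (Set.Ico 0 t₀)).toReal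
          = ∫ s, (Set.Ico (0:ℝ) t₀).indicator 1 s ∂(μ t) :=
        (integral_indicator_one measurableSet_Ico).symm
      have h3 : ∫ s, (Set.Ico (0:ℝ) t₀).indicator 1 s ∂(μ t)
          ≤ ∫ s, Real.exp 1 * Real.exp (-(1/t₀) * s) ∂(μ t) := by
        refine integral_mono ((integrable_const (1:ℝ)).indicator measurableSet_Ico)
          ((hint (1/t₀) (by positivity)).const_mul _) ?_
        intro s
        by_cases hsm : s ∈ Set.Ico (0:ℝ) t₀
        · rw [Set.indicator_of_mem hsm]
          simp only [Pi.one_apply]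
          rw [← Real.exp_add]
          refine Real.one_le_exp ?_
          have hst : (1/t₀) * s ≤ 1 := by
            rw [one_div, inv_mul_le_iff₀ ht₀, mul_one]
            exact hsm.2.le
          nlinarith
        · rw [Set.indicator_of_notMem hsm]
          positivity
      have h4 : ∫ s, Real.exp 1 * Real.exp (-(1/t₀) * s) ∂(μ t)
          = Real.exp 1 * Real.exp (-t * φ (1/t₀)) := by
        rw [integral_const_mul, hlap (1/t₀) (by positivity)]
      linarith
    -- bound on μ t (Ioi (K t₀))
    have hB : (μ t (Set.Ioi (K * t₀))).toReal * (1 - Real.exp (-1))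
        ≤ t * φ (1/(K * t₀)) := by
      have hlam : (0:ℝ) < 1/(K * t₀) := by positivity
      have hint2 := hint (1/(K * t₀)) hlam.le
      have h3 : ∫ s, (Set.Ioi (K * t₀)).indicator
            (fun _ => (1 - Real.exp (-1))) s ∂(μ t)
          ≤ ∫ s, (1 - Real.exp (-(1/(K * t₀)) * s)) ∂(μ t) := by
        refine integral_mono_ae ((integrable_const _).indicator measurableSet_Ioi)
          ((integrable_const 1).sub hint2) ?_
        filter_upwards [hae] with s hs
        by_cases hsm : s ∈ Set.Ioi (K * t₀)
        · rw [Set.indicator_of_mem hsm]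
          have hexp : Real.exp (-(1/(K * t₀)) * s) ≤ Real.exp (-1) := by
            apply Real.exp_le_exp.mpr
            rw [neg_mul, neg_le_neg_iff]
            rw [one_div, inv_mul_eq_div, le_div_iff₀ hKt₀, one_mul]
            exact (Set.mem_Ioi.mp hsm).le
          linarith
        · rw [Set.indicator_of_notMem hsm]
          have hexp : Real.exp (-(1/(K * t₀)) * s) ≤ 1 := by
            apply Real.exp_le_one_iff.mpr
            have : 0 ≤ (1/(K * t₀)) * s := by positivity
            linarith
          linarith
      have hleft : ∫ s, (Set.Ioi (K * t₀)).indicator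
            (fun _ => (1 - Real.exp (-1))) s ∂(μ t)
          = (μ t (Set.Ioi (K * t₀))).toReal * (1 - Real.exp (-1)) := by
        rw [integral_indicator_const _ measurableSet_Ioi, smul_eq_mul, Measure.real]
      have hright : ∫ s, (1 - Real.exp (-(1/(K * t₀)) * s)) ∂(μ t)
          = 1 - Real.exp (-t * φ (1/(K * t₀))) := by
        rw [integral_sub (integrable_const 1) hint2, hlap _ hlam.le, integral_const, Measure.real,
          hP.measure_univ, ENNReal.toReal_one, smul_eq_mul, mul_one]
      have hexp2 : 1 - Real.exp (-t * φ (1/(K * t₀))) ≤ t * φ (1/(K * t₀)) := by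
        have := Real.add_one_le_exp (-t * φ (1/(K * t₀)))
        linarith
      rw [hleft] at h3
      rw [hright] at h3
      linarith
    -- numeric bounds
    have ht3 : 3 ≤ t * φ (1/t₀) := by
      have h1 : t₁ * φ (1/t₀) = 3 := by
        rw [ht₁def]; field_simp
      nlinarith [ht.1]
    have hb1 : (μ t (Set.Iio t₀)).toReal ≤ 1/4 := by
      have h1 : Real.exp 1 * Real.exp (-t * φ (1/t₀)) ≤ Real.exp (-2) := by
        rw [← Real.exp_add]
        apply Real.exp_le_exp.mpr
        linarith
      have h2 : Real.exp (-2) ≤ 1/4 := by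
        have hm : Real.exp (-2) * Real.exp 2 = 1 := by
          rw [← Real.exp_add]; norm_num
        have h4 : (4:ℝ) ≤ Real.exp 2 := by
          have : Real.exp 2 = Real.exp 1 * Real.exp 1 := by
            rw [← Real.exp_add]; norm_num
          nlinarith
        nlinarith [Real.exp_pos (-2)]
      linarith
    have hφK : φ (1/(K * t₀)) ≤ φ (1/t₀) / 100 := by
      have h := hφlo (1/K) (by positivity) ((div_le_one hK0).mpr hK1) (1/t₀)
        (by positivity)
      have harg : (1/K) * (1/t₀) = 1/(K * t₀) := by
        rw [div_mul_div_comm, one_mul]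
      have hpow : (1/K) ^ β = 1/(100 * C₄) := by
        rw [one_div, Real.inv_rpow hK0.le, hKβ, one_div]
      rw [harg, hpow] at h
      calc φ (1/(K * t₀)) ≤ C₄ * (1/(100 * C₄)) * φ (1/t₀) := h
      _ = φ (1/t₀) / 100 := by field_simp
    have hb2 : (μ t (Set.Ioi (K * t₀))).toReal ≤ 1/4 := by
      have hemh : Real.exp (-1) ≤ 1/2 := by
        have hm : Real.exp (-1) * Real.exp 1 = 1 := by
          rw [← Real.exp_add]; norm_num
        nlinarith [Real.exp_pos (-1)]
      have ht6 : t ≤ 6 / φ (1/t₀) := by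
        have h1 : 2 * t₁ = 6 / φ (1/t₀) := by rw [ht₁def]; ring
        linarith [ht.2]
      have hφKnn : 0 ≤ φ (1/(K * t₀)) := hφnn _ (Set.mem_Ici.mpr (by positivity : (0:ℝ) ≤ 1/(K * t₀)))
      have htq : t * φ (1/(K * t₀)) ≤ 6/100 := by
        have h1 : t * φ (1/(K * t₀)) ≤ (6 / φ (1/t₀)) * (φ (1/t₀) / 100) := by
          apply mul_le_mul ht6 hφK hφKnn (by positivity)
        have h2 : (6 / φ (1/t₀)) * (φ (1/t₀) / 100) = 6/100 := by
          field_simp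
        linarith
      nlinarith [ENNReal.toReal_nonneg (a := μ t (Set.Ioi (K * t₀)))]
    have hsplit : (1:ℝ) ≤ (μ t (Set.Iio t₀)).toReal
        + (μ t (Set.Icc t₀ (K * t₀))).toReal + (μ t (Set.Ioi (K * t₀))).toReal := by
      have hss : (Set.univ : Set ℝ)
          ⊆ (Set.Iio t₀ ∪ Set.Icc t₀ (K * t₀)) ∪ Set.Ioi (K * t₀) := by
        intro s _
        rcases lt_or_ge s t₀ with h | h
        · exact Or.inl (Or.inl h)
        · rcases le_or_gt s (K * t₀) with h' | h'
          · exact Or.inl (Or.inr ⟨h, h'⟩)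
          · exact Or.inr h'
      have h1 : μ t Set.univ ≤ μ t (Set.Iio t₀) + μ t (Set.Icc t₀ (K * t₀))
          + μ t (Set.Ioi (K * t₀)) := by
        calc μ t Set.univ ≤ μ t ((Set.Iio t₀ ∪ Set.Icc t₀ (K * t₀)) ∪ Set.Ioi (K * t₀)) :=
              measure_mono hss
        _ ≤ μ t (Set.Iio t₀ ∪ Set.Icc t₀ (K * t₀)) + μ t (Set.Ioi (K * t₀)) :=
              measure_union_le _ _
        _ ≤ μ t (Set.Iio t₀) + μ t (Set.Icc t₀ (K * t₀)) + μ t (Set.Ioi (K * t₀)) := by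
              gcongr
              exact measure_union_le _ _
      have hne1 : μ t (Set.Iio t₀) + μ t (Set.Icc t₀ (K * t₀))
          + μ t (Set.Ioi (K * t₀)) ≠ ⊤ := by
        refine ENNReal.add_ne_top.mpr ⟨ENNReal.add_ne_top.mpr
          ⟨measure_ne_top _ _, measure_ne_top _ _⟩, measure_ne_top _ _⟩
      have h2 := ENNReal.toReal_mono hne1 h1
      rw [hP.measure_univ, ENNReal.toReal_one,
        ENNReal.toReal_add (ENNReal.add_ne_top.mpr
          ⟨measure_ne_top _ _, measure_ne_top _ _⟩) (measure_ne_top _ _),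
        ENNReal.toReal_add (measure_ne_top _ _) (measure_ne_top _ _)] at h2
      linarith
    have hmid : 1/2 ≤ (μ t (Set.Icc t₀ (K * t₀))).toReal := by linarith
    calc ENNReal.ofReal (1/2) ≤ ENNReal.ofReal ((μ t (Set.Icc t₀ (K * t₀))).toReal) :=
          ENNReal.ofReal_le_ofReal hmid
    _ = μ t (Set.Icc t₀ (K * t₀)) := ENNReal.ofReal_toReal (measure_ne_top _ _)
  -- lower bound on U (Icc t₀ (K t₀))
  have hIccsub : Set.Icc t₀ (K * t₀) ⊆ Set.Ioi (0:ℝ) := fun s hs => ht₀.trans_le hs.1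
  have hIccsub1 : Set.Icc t₁ (2 * t₁) ⊆ Set.Ioi (0:ℝ) := fun s hs => ht₁.trans_le hs.1
  have hU1 : ENNReal.ofReal (1/2) * ENNReal.ofReal t₁ ≤ U (Set.Icc t₀ (K * t₀)) := by
    rw [hU _ measurableSet_Icc]
    have step : ∫⁻ t in Set.Ioi (0:ℝ),
        (Set.Icc t₁ (2 * t₁)).indicator (fun _ => ENNReal.ofReal (1/2)) t
        ≤ ∫⁻ t in Set.Ioi (0:ℝ), μ t (Set.Icc t₀ (K * t₀)) := by
      refine lintegral_mono ?_
      intro t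
      by_cases h : t ∈ Set.Icc t₁ (2 * t₁)
      · rw [Set.indicator_of_mem h]; exact hμbound t h
      · rw [Set.indicator_of_notMem h]; exact zero_le
    refine le_trans (le_of_eq ?_) step
    rw [lintegral_indicator measurableSet_Icc, setLIntegral_const,
      Measure.restrict_apply measurableSet_Icc,
      Set.inter_eq_self_of_subset_left hIccsub1, Real.volume_Icc,
      show 2 * t₁ - t₁ = t₁ by ring]
  have hDne : D ≠ 0 := hD0.ne'
  have hVρne : Vρ ≠ 0 := hVρ.ne'
  have hqne : φ (1 / t₀) ≠ 0 := hq.ne'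
  have hfinal : ENNReal.ofReal (c₂ / (D * Vρ)) * U (Set.Icc t₀ (K * t₀))
      ≤ ∫⁻ s in Set.Ioi (0:ℝ), ENNReal.ofReal (p s x y) ∂U := by
    have step : ∫⁻ s in Set.Ioi (0:ℝ),
        (Set.Icc t₀ (K * t₀)).indicator (fun _ => ENNReal.ofReal (c₂ / (D * Vρ))) s ∂U
        ≤ ∫⁻ s in Set.Ioi (0:ℝ), ENNReal.ofReal (p s x y) ∂U := by
      refine lintegral_mono ?_
      intro s
      by_cases h : s ∈ Set.Icc t₀ (K * t₀)
      · rw [Set.indicator_of_mem h]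
        exact ENNReal.ofReal_le_ofReal (hpbound s h)
      · rw [Set.indicator_of_notMem h]; exact zero_le
    refine le_trans (le_of_eq ?_) step
    rw [lintegral_indicator measurableSet_Icc, setLIntegral_const,
      Measure.restrict_apply measurableSet_Icc,
      Set.inter_eq_self_of_subset_left hIccsub]
  calc ENNReal.ofReal (3 * c₂ / (2 * D) / (Vρ * φ (1 / t₀)))
      = ENNReal.ofReal (c₂ / (D * Vρ) * ((1/2) * t₁)) := by
        rw [ht₁def]
        congr 1
        field_simp
    _ = ENNReal.ofReal (c₂ / (D * Vρ)) * (ENNReal.ofReal (1/2) * ENNReal.ofReal t₁) := by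
        rw [ENNReal.ofReal_mul (by positivity), ENNReal.ofReal_mul (by norm_num)]
    _ ≤ ENNReal.ofReal (c₂ / (D * Vρ)) * U (Set.Icc t₀ (K * t₀)) :=
        mul_le_mul_right hU1 _
    _ ≤ _ := hfinal
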